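/- arXiv:2209.14986 — 3 statements merged into one kernel-verified Lean document; each statement's English description precedes it below -/
import Mathlib

section
/- In the same setting as the previous statement, the degree-zero homology of the complex K satisfies H₀(K) ≅ T ⊗_ℤ (N / im(M → N)). -/
open TensorProduct

/-- in the setting of Proposition 1.2 (`f : M → N`, `P₀ = M ⊕ ℤ^X` with a
surjection `h : P₀ → N` extending `f`, `W₀ = ker h`, `0 → W₁ →^j Q₁ →^p W₀ → 0` exact with
`Q₁` free, `T` an abelian group, and `K` the complex `T⊗W₁ → T⊗Q₁ → T⊗ℤ^X`), the
degree-zero homology `H₀(K)`, i.e. the cokernel of `T ⊗ d₁ : T⊗Q₁ → T⊗ℤ^X`, is isomorphic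
to `T ⊗ (N / im f)`. -/
theorem stmt5 (M N X T W₁ Q₁ : Type) [AddCommGroup M] [AddCommGroup N] [AddCommGroup T]
    [AddCommGroup W₁] [AddCommGroup Q₁]
    (f : M →ₗ[ℤ] N)
    (h : (M × (X →₀ ℤ)) →ₗ[ℤ] N)
    (hhf : ∀ m : M, h (m, 0) = f m)
    (hh : Function.Surjective h)
    (j : W₁ →ₗ[ℤ] Q₁) (p : Q₁ →ₗ[ℤ] ↥(LinearMap.ker h))
    (hj : Function.Injective j) (hp : Function.Surjective p)
    (hexact : LinearMap.ker p = LinearMap.range j)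
    (hfree : Module.Free ℤ Q₁)
    (d₁ : Q₁ →ₗ[ℤ] (X →₀ ℤ))
    (hd₁ : ∀ x : Q₁, d₁ x = ((p x : M × (X →₀ ℤ))).2) :
    Nonempty
      (((T ⊗[ℤ] (X →₀ ℤ)) ⧸ LinearMap.range (LinearMap.lTensor T d₁)) ≃ₗ[ℤ]
        (T ⊗[ℤ] (N ⧸ LinearMap.range f))) := by
  -- the map g : ℤ^X → N ⧸ range f
  set g : (X →₀ ℤ) →ₗ[ℤ] (N ⧸ LinearMap.range f) :=
    (LinearMap.range f).mkQ ∘ₗ h ∘ₗ LinearMap.inr ℤ M (X →₀ ℤ) with hg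
  have hgsurj : Function.Surjective g := by
    intro nbar
    obtain ⟨n, rfl⟩ := Submodule.mkQ_surjective _ nbar
    obtain ⟨⟨m, x⟩, hmx⟩ := hh n
    refine ⟨x, ?_⟩
    have : h (0, x) = n - f m := by
      have : h (m, x) = h (m, 0) + h (0, x) := by
        rw [← map_add]; simp
      rw [hmx, hhf] at this
      rw [eq_sub_iff_add_eq, this, add_comm]
    simp only [hg, LinearMap.comp_apply, LinearMap.inr_apply, this]
    rw [Submodule.mkQ_apply, Submodule.mkQ_apply, Submodule.Quotient.eq]
    exact ⟨-m, by simp⟩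
  have hexact2 : Function.Exact d₁ g := by
    intro y
    constructor
    · intro hy
      have : h (0, y) ∈ LinearMap.range f := by
        simpa [hg, Submodule.Quotient.mk_eq_zero] using hy
      obtain ⟨m, hm⟩ := this
      have hker : ((-m, y) : M × (X →₀ ℤ)) ∈ LinearMap.ker h := by
        have : ((-m, y) : M × (X →₀ ℤ)) = (-m, 0) + (0, y) := by simp
        simp only [LinearMap.mem_ker, this, map_add]
        have : h (-m, 0) = f (-m) := hhf _
        rw [this, map_neg, hm]; abel
      obtain ⟨q, hq⟩ := hp ⟨_, hker⟩
      exact ⟨q, by rw [hd₁, hq]⟩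
    · rintro ⟨q, rfl⟩
      rw [hd₁]
      obtain ⟨⟨m', y'⟩, hker⟩ := p q
      simp only [hg, LinearMap.comp_apply, LinearMap.inr_apply]
      rw [Submodule.mkQ_apply, Submodule.Quotient.mk_eq_zero]
      refine ⟨-m', ?_⟩
      have hsplit : h (m', y') = h (m', 0) + h (0, y') := by
        rw [← map_add]; simp
      rw [LinearMap.mem_ker] at hker
      rw [hker, hhf] at hsplit
      rw [map_neg]
      exact (eq_neg_of_add_eq_zero_right hsplit.symm).symm
  have hTexact : Function.Exact (LinearMap.lTensor T d₁) (LinearMap.lTensor T g) :=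
    lTensor_exact T hexact2 hgsurj
  have hTsurj : Function.Surjective (LinearMap.lTensor T g) :=
    LinearMap.lTensor_surjective T hgsurj
  exact ⟨(Submodule.quotEquivOfEq _ _ hTexact.linearMap_ker_eq.symm).trans
    ((LinearMap.lTensor T g).quotKerEquivOfSurjective hTsurj)⟩
end

section
/- Let C → B be a surjective ring homomorphism with kernel 𝔞, and let R be a simplicial C-algebra with R₀ = C, each Rₙ a polynomial C-algebra, together with a surjective quasi-isomorphism R → B (constant simplicial ring). Let I = ker(R ⊗_C B → B). Then H₀(I) = 0 and Hₙ(I) ≅ Torₙ^C(B, B) for all n > 0. -/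
/-!
Since each `Rₙ` is a free `C`-module and `R → B` is a quasi-isomorphism, the alternating face map
complex of `R` is a projective resolution of `B`, so `R ⊗_C B` computes `Tor^C(B, B)`. The
augmentation `R ⊗_C B → B` is degreewise surjective (`1 ⊗ b ↦ b`), and the constant simplicial
module `B` has no homology in positive degrees, so the long exact homology sequence of
`0 → I → R ⊗_C B → B → 0` gives `Hₙ(I) ≅ Hₙ(R ⊗_C B)` for `n > 0`. In degree `0`,
`R₀ ⊗_C B ≅ C ⊗_C B → B` is an isomorphism, so `I₀ = 0` and hence `H₀(I) = 0`.
-/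

open CategoryTheory AlgebraicTopology Limits MonoidalCategory TensorProduct

noncomputable instance (C : Type) [CommRing C] : Abelian (SimplicialObject (ModuleCat C)) := by
  dsimp [SimplicialObject]; infer_instance

/-- The homology of a simplicial module (via its alternating face map complex). -/
noncomputable abbrev simpHomologyC (C : Type) [CommRing C]
    (T : SimplicialObject (ModuleCat C)) (n : ℕ) : ModuleCat C :=
  ((alternatingFaceMapComplex (ModuleCat C)).obj T).homology n

theorem TensorProduct.injective_of_tmul_eq_mul {C A B : Type*} [CommSemiring C] [Semiring A]
    [Algebra C A] [Semiring B] [Algebra C B] (e : A ≃ₐ[C] C) (f : A →ₐ[C] B)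
    (φ : A ⊗[C] B →ₗ[C] B) (hφ : ∀ a b, φ (a ⊗ₜ b) = f a * b) : Function.Injective φ := by
  have hf : ∀ a, f a = algebraMap C B (e a) := fun a => by
    simpa using DFunLike.congr_fun
      (Subsingleton.elim (f.comp e.symm.toAlgHom) (Algebra.ofId C B)) (e a)
  have : φ = TensorProduct.lid C B ∘ₗ TensorProduct.map e.toLinearMap LinearMap.id :=
    TensorProduct.ext' fun a b => by simp [hφ, hf, _root_.Algebra.smul_def]
  rw [this]
  exact (TensorProduct.lid C B).injective.comp
    (TensorProduct.congr e.toLinearEquiv (LinearEquiv.refl C B)).injective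

section Abelian

variable {D : Type*} [Category D] [Abelian D]

theorem CategoryTheory.ShortComplex.ShortExact.isIso_homologyMap_f_of_isZero {ι : Type*}
    {c : ComplexShape ι} {S : ShortComplex (HomologicalComplex D c)} (hS : S.ShortExact)
    {i j : ι} (hij : c.Rel i j) (hi : IsZero (S.X₃.homology i)) (hj : IsZero (S.X₃.homology j)) :
    IsIso (HomologicalComplex.homologyMap S.f j) := by
  have : Mono (HomologicalComplex.homologyMap S.f j) :=
    (hS.homology_exact₁ i j hij).mono_g (hi.eq_of_src _ _)
  have : Epi (HomologicalComplex.homologyMap S.f j) :=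
    (hS.homology_exact₂ j).epi_f (hj.eq_of_tgt _ _)
  exact isIso_of_mono_of_epi _

lemma isZero_homology_zero_alternatingFaceMapComplex {X : SimplicialObject D}
    (hX : IsZero (X.obj (Opposite.op (SimplexCategory.mk 0)))) :
    IsZero (((alternatingFaceMapComplex D).obj X).homology 0) := by
  rw [← HomologicalComplex.exactAt_iff_isZero_homology]
  exact ShortComplex.exact_of_isZero_X₂ _ hX

lemma isZero_homology_alternatingFaceMapComplex_const (M : D) {n : ℕ} (hn : n ≠ 0) :
    IsZero (((alternatingFaceMapComplex D).obj ((SimplicialObject.const D).obj M)).homology n) :=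
  (HomologicalComplex.isZero_single_obj_homology _ 0 M n hn).of_iso
    ((SimplicialObject.Augmented.ExtraDegeneracy.const M).homotopyEquiv.toHomologyIso n)

noncomputable def alternatingFaceMapComplexWhiskeringIso {E : Type*} [Category E] [Preadditive E]
    (G : D ⥤ E) [G.Additive] (X : SimplicialObject D) :
    (alternatingFaceMapComplex E).obj (((SimplicialObject.whiskering D E).obj G).obj X) ≅
      (G.mapHomologicalComplex _).obj ((alternatingFaceMapComplex D).obj X) :=
  eqToIso (Functor.congr_obj (map_alternatingFaceMapComplex G) X).symm

noncomputable def CategoryTheory.ProjectiveResolution.ofSimplicial {X : SimplicialObject D}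
    {M : D} (f : X ⟶ (SimplicialObject.const D).obj M)
    [QuasiIso ((alternatingFaceMapComplex D).map f)]
    (hX : ∀ n : ℕ, Projective (X.obj (Opposite.op (SimplexCategory.mk n)))) :
    ProjectiveResolution M where
  complex := (alternatingFaceMapComplex D).obj X
  projective := hX
  π := (alternatingFaceMapComplex D).map f ≫
    (SimplicialObject.Augmented.ExtraDegeneracy.const M).homotopyEquiv.hom
  quasiIso := quasiIso_comp (hφ' := HomotopyEquiv.quasiIso_hom _) _ _

variable [MonoidalCategory D] [BraidedCategory D] [MonoidalPreadditive D]
  [HasProjectiveResolutions D]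

noncomputable def CategoryTheory.ProjectiveResolution.homologyTensorRightIsoTor {N : D}
    (P : ProjectiveResolution N) (M : D) (n : ℕ) :
    (((tensorRight M).mapHomologicalComplex _).obj P.complex).homology n ≅
      ((Tor D n).obj M).obj N :=
  (HomologicalComplex.homologyFunctor _ _ n).mapIso
      ((NatIso.mapHomologicalComplex (BraidedCategory.tensorLeftIsoTensorRight M) _).app
        P.complex).symm ≪≫
    (P.isoLeftDerivedObj ((tensoringLeft D).obj M) n).symm

noncomputable def homologyWhiskeringTensorRightIsoTor {X : SimplicialObject D} {N : D}
    (f : X ⟶ (SimplicialObject.const D).obj N) [QuasiIso ((alternatingFaceMapComplex D).map f)]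
    (hX : ∀ n : ℕ, Projective (X.obj (Opposite.op (SimplexCategory.mk n)))) (M : D) (n : ℕ) :
    ((alternatingFaceMapComplex D).obj
        (((SimplicialObject.whiskering D D).obj (tensorRight M)).obj X)).homology n ≅
      ((Tor D n).obj M).obj N :=
  (HomologicalComplex.homologyFunctor _ _ n).mapIso
      (alternatingFaceMapComplexWhiskeringIso (tensorRight M) X) ≪≫
    (ProjectiveResolution.ofSimplicial f hX).homologyTensorRightIsoTor M n

end Abelian

section ModuleCat

variable {C : Type} [CommRing C]

lemma CategoryTheory.ShortComplex.ShortExact.map_alternatingFaceMapComplex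
    {S : ShortComplex (SimplicialObject (ModuleCat C))} (hS : S.ShortExact) :
    (S.map (alternatingFaceMapComplex (ModuleCat C))).ShortExact :=
  HomologicalComplex.shortExact_of_degreewise_shortExact _ fun i =>
    hS.map_of_exact ((evaluation _ _).obj (Opposite.op (SimplexCategory.mk i)))

lemma isZero_kernel_obj_of_mono_app {X Y : SimplicialObject (ModuleCat C)} (f : X ⟶ Y)
    (n : SimplexCategoryᵒᵖ) [Mono (f.app n)] : IsZero ((kernel f).obj n) :=
  IsZero.of_mono_eq_zero ((kernel.ι f).app n) <| zero_of_comp_mono (f.app n) <| by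
    rw [← NatTrans.comp_app, kernel.condition]; rfl

lemma isIso_homologyMap_kernel_ι {X : SimplicialObject (ModuleCat C)} {M : ModuleCat C}
    (ε : X ⟶ (SimplicialObject.const _).obj M) [∀ n, Epi (ε.app n)] {n : ℕ} (hn : n ≠ 0) :
    IsIso (HomologicalComplex.homologyMap
      ((alternatingFaceMapComplex (ModuleCat C)).map (kernel.ι ε)) n) := by
  have : Epi ε := NatTrans.epi_of_epi_app ε
  have hS : (ShortComplex.mk (kernel.ι ε) ε (kernel.condition ε)).ShortExact :=
    { exact := ShortComplex.exact_of_f_is_kernel _ (kernelIsKernel ε) }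
  exact hS.map_alternatingFaceMapComplex.isIso_homologyMap_f_of_isZero (i := n + 1) rfl
    (isZero_homology_alternatingFaceMapComplex_const M (Nat.succ_ne_zero n))
    (isZero_homology_alternatingFaceMapComplex_const M hn)

lemma projective_forget₂_of_algEquiv_mvPolynomial {A : AlgCat C} {σ : Type}
    (e : A ≃ₐ[C] MvPolynomial σ C) : Projective ((forget₂ (AlgCat C) (ModuleCat C)).obj A) :=
  have : Module.Free C A := Module.Free.of_equiv e.symm.toLinearEquiv
  ModuleCat.projective_of_free (Module.Free.chooseBasis C A)

end ModuleCat

theorem stmt8_general (C B : Type) [CommRing C] [CommRing B] [Algebra C B]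
    (R : SimplicialObject (AlgCat C))
    (aug : R ⟶ (Functor.const SimplexCategoryᵒᵖ).obj (AlgCat.of C B))
    -- `R₀ = C`
    (h0 : Nonempty (R.obj (Opposite.op (SimplexCategory.mk 0)) ≃ₐ[C] C))
    -- each `Rₙ` is a polynomial `C`-algebra
    (hpoly : ∀ n : SimplexCategoryᵒᵖ, ∃ σ : Type,
      Nonempty (R.obj n ≃ₐ[C] MvPolynomial σ C))
    -- the augmentation is a degreewise surjective quasi-isomorphism
    (hquasi : QuasiIso ((alternatingFaceMapComplex (ModuleCat C)).map
      (((SimplicialObject.whiskering _ _).obj (forget₂ (AlgCat C) (ModuleCat C))).map aug)))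
    -- the augmentation `R ⊗_C B → B` of the simplicial module `R ⊗_C B`
    (ε : ((SimplicialObject.whiskering _ _).obj
            ((forget₂ (AlgCat C) (ModuleCat C)) ⋙ tensorRight (ModuleCat.of C B))).obj R ⟶
          (Functor.const SimplexCategoryᵒᵖ).obj (ModuleCat.of C B))
    (hε : ∀ (n : SimplexCategoryᵒᵖ) (r : R.obj n) (b : B),
      ε.app n (r ⊗ₜ[C] b) = (show B from aug.app n r) * b) :
    Limits.IsZero (simpHomologyC C (kernel ε) 0) ∧
    (∀ n : ℕ, 0 < n →
      Nonempty (simpHomologyC C (kernel ε) n ≅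
        ((Tor (ModuleCat C) n).obj (ModuleCat.of C B)).obj (ModuleCat.of C B))) := by
  obtain ⟨e0⟩ := h0
  have hε₀ : Mono (ε.app (Opposite.op (SimplexCategory.mk 0))) :=
    (ModuleCat.mono_iff_injective _).mpr <|
      TensorProduct.injective_of_tmul_eq_mul e0 (aug.app _).hom (ε.app _).hom (hε _)
  refine ⟨isZero_homology_zero_alternatingFaceMapComplex (isZero_kernel_obj_of_mono_app ε _),
    fun n hn => ?_⟩
  have hε_epi : ∀ m, Epi (ε.app m) := fun m => (ModuleCat.epi_iff_surjective _).mpr fun b =>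
    ⟨(1 : R.obj m) ⊗ₜ[C] (show B from b), by simp [hε]⟩
  have hI : IsIso (HomologicalComplex.homologyMap
      ((alternatingFaceMapComplex _).map (kernel.ι ε)) n) :=
    isIso_homologyMap_kernel_ι ε hn.ne'
  let F := forget₂ (AlgCat C) (ModuleCat C)
  let c : ((SimplicialObject.whiskering _ _).obj F).obj
      ((SimplicialObject.const _).obj (AlgCat.of C B)) ≅
        (SimplicialObject.const _).obj (ModuleCat.of C B) := Functor.constComp _ _ F
  have hres : QuasiIso ((alternatingFaceMapComplex _).map
      (((SimplicialObject.whiskering _ _).obj F).map aug ≫ c.hom)) := by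
    rw [Functor.map_comp]; infer_instance
  exact ⟨@asIso _ _ _ _ _ hI ≪≫ homologyWhiskeringTensorRightIsoTor
    (((SimplicialObject.whiskering _ _).obj F).map aug ≫ c.hom)
    (fun m => (hpoly _).elim fun _ ⟨e⟩ => projective_forget₂_of_algEquiv_mvPolynomial e)
    (ModuleCat.of C B) n⟩

/-- let `C → B` be a surjective ring homomorphism, `R` a simplicial
`C`-algebra with `R₀ = C` and each `Rₙ` a polynomial `C`-algebra, equipped with a
surjective quasi-isomorphism (augmentation) `R → B`.  Let `I = ker(R ⊗_C B → B)`.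
Then `H₀(I) = 0` and `Hₙ(I) ≅ Torₙ^C(B, B)` for all `n > 0`. -/
theorem stmt8 (C B : Type) [CommRing C] [CommRing B] [Algebra C B]
    (hsurj : Function.Surjective (algebraMap C B))
    (R : SimplicialObject (AlgCat C))
    (aug : R ⟶ (Functor.const SimplexCategoryᵒᵖ).obj (AlgCat.of C B))
    -- `R₀ = C`
    (h0 : Nonempty (R.obj (Opposite.op (SimplexCategory.mk 0)) ≃ₐ[C] C))
    -- each `Rₙ` is a polynomial `C`-algebra
    (hpoly : ∀ n : SimplexCategoryᵒᵖ, ∃ σ : Type,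
      Nonempty (R.obj n ≃ₐ[C] MvPolynomial σ C))
    -- the augmentation is a degreewise surjective quasi-isomorphism
    (haugsurj : ∀ n : SimplexCategoryᵒᵖ, Function.Surjective (aug.app n))
    (hquasi : QuasiIso ((alternatingFaceMapComplex (ModuleCat C)).map
      (((SimplicialObject.whiskering _ _).obj (forget₂ (AlgCat C) (ModuleCat C))).map aug)))
    -- the augmentation `R ⊗_C B → B` of the simplicial module `R ⊗_C B`
    (ε : ((SimplicialObject.whiskering _ _).obj
            ((forget₂ (AlgCat C) (ModuleCat C)) ⋙ tensorRight (ModuleCat.of C B))).obj R ⟶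
          (Functor.const SimplexCategoryᵒᵖ).obj (ModuleCat.of C B))
    (hε : ∀ (n : SimplexCategoryᵒᵖ) (r : R.obj n) (b : B),
      ε.app n (r ⊗ₜ[C] b) = (show B from aug.app n r) * b) :
    Limits.IsZero (simpHomologyC C (kernel ε) 0) ∧
    (∀ n : ℕ, 0 < n →
      Nonempty (simpHomologyC C (kernel ε) n ≅
        ((Tor (ModuleCat C) n).obj (ModuleCat.of C B)).obj (ModuleCat.of C B))) :=
  stmt8_general C B R aug h0 hpoly hquasi ε hε
end

section
/- Let h : P → N be a surjective monoid homomorphism of commutative monoids and let J = ker(ℤ[P] → ℤ[N]) be the kernel of the induced map of monoid algebras. Then J is generated as a ℤ[P]-module (even as an abelian group) by the elements p − p' for pairs p, p' ∈ P with h(p) = h(p'), and the map v_h : J/J² → ℤ[N] ⊗_ℤ W₀ given by λ(p − p') ↦ λ·h(p') ⊗ (p − p') (where W₀ = ker(P^gp → N^gp), written additively) is a well-defined homomorphism of ℤ[N]-modules. -/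
/-!
For each `n` in the image of `h` choose a point `σ n` of its fibre. The assignment
`p ↦ h p ⊗ (ιP p / ιP (σ (h p)))` extends linearly to `D : ℤ[P] → ℤ[N] ⊗ W₀`, and since the
`σ`-terms cancel, `D (p - p') = h p' ⊗ (ιP p / ιP p')` whenever `h p = h p'`. Multiplying such a
generator by `q ∈ P` translates both `p` and `p'` and leaves `ιP p / ιP p'` unchanged, so
`D (x * u) = h(x) • D u` for `u ∈ J`. Hence `D` kills `J²` and descends to `J/J²`, `ℤ[N]`-linearly.
That the differences generate `J` follows from `x - σ(h x)` lying in their span for every `x`.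
-/

open TensorProduct

namespace MonoidAlgebra

variable {R M N V : Type*} [CommRing R] [AddCommGroup V] [Module R V]

variable (R) in
noncomputable def linearCombination (v : M → V) : R[M] →ₗ[R] V :=
  Finsupp.linearCombination R v ∘ₗ (coeffLinearEquiv R).toLinearMap

@[simp]
theorem linearCombination_single (v : M → V) (m : M) (r : R) :
    linearCombination R v (single m r) = r • v m := by
  simp [linearCombination, coeffLinearEquiv, coeff_single]

theorem ker_mapDomainLinearMap [Nonempty M] (f : M → N) :
    LinearMap.ker (mapDomainLinearMap R R f) =
      Submodule.span R {y | ∃ a a', f a = f a' ∧ y = single a 1 - single a' 1} := by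
  set S := Submodule.span R {y : R[M] | ∃ a a', f a = f a' ∧ y = single a 1 - single a' 1}
  refine le_antisymm (fun x hx => ?_) (Submodule.span_le.2 ?_)
  · let σ := linearCombination R fun n => (single (Function.invFun f n) 1 : R[M])
    have key : ∀ y, y - σ (mapDomainLinearMap R R f y) ∈ S := by
      intro y
      induction y using induction_linear with
      | zero => simp
      | add y z hy hz => simpa [add_sub_add_comm] using S.add_mem hy hz
      | single a r =>
        rw [mapDomainLinearMap_single, linearCombination_single, ← mul_one r, ← smul_single',
          mul_one, ← smul_sub]
        exact S.smul_mem r (Submodule.subset_span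
          ⟨a, _, (Function.invFun_eq ⟨a, rfl⟩).symm, rfl⟩)
    simpa [LinearMap.mem_ker.1 hx] using key x
  · rintro _ ⟨a, a', haa', rfl⟩
    simp [haa']

end MonoidAlgebra

namespace KerCotangent

variable {P N Pgp Ngp : Type*} [CommMonoid P] [CommMonoid N] [CommGroup Pgp] [CommGroup Ngp]
  {h : P →* N} {ιP : P →* Pgp} {ιN : N →* Ngp} {hgp : Pgp →* Ngp}
  (hcomp : ∀ p, hgp (ιP p) = ιN (h p))

open MonoidAlgebra

noncomputable def kerDiv (p : P) : MonoidHom.ker hgp :=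
  ⟨ιP p / ιP (Function.invFun h (h p)), by
    simp [MonoidHom.mem_ker, hcomp, Function.invFun_eq (⟨p, rfl⟩ : ∃ a, h a = h p)]⟩

theorem coe_kerDiv_div_kerDiv {p p' : P} (hpp : h p = h p') :
    ((kerDiv hcomp p / kerDiv hcomp p' : MonoidHom.ker hgp) : Pgp) = ιP p / ιP p' := by
  simp [kerDiv, hpp]

theorem kerDiv_mul_div_kerDiv_mul (q : P) {p p' : P} (hpp : h p = h p') :
    kerDiv hcomp (q * p) / kerDiv hcomp (q * p') = kerDiv hcomp p / kerDiv hcomp p' := by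
  ext
  rw [coe_kerDiv_div_kerDiv hcomp (by rw [map_mul, map_mul, hpp]), coe_kerDiv_div_kerDiv hcomp hpp,
    map_mul, map_mul, mul_div_mul_left_eq_div]

noncomputable def liftV : ℤ[P] →ₗ[ℤ] ℤ[N] ⊗[ℤ] Additive (MonoidHom.ker hgp) :=
  linearCombination ℤ fun p => single (h p) 1 ⊗ₜ Additive.ofMul (kerDiv hcomp p)

theorem liftV_single_sub_single {p p' : P} (hpp : h p = h p') :
    liftV hcomp (single p 1 - single p' 1) =
      single (h p') 1 ⊗ₜ Additive.ofMul (kerDiv hcomp p / kerDiv hcomp p') := by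
  simp [liftV, hpp, ← tmul_sub]

theorem liftV_mul_single_sub_single (x : ℤ[P]) {p p' : P} (hpp : h p = h p') :
    liftV hcomp (x * (single p 1 - single p' 1)) =
      mapDomainRingHom ℤ h x • liftV hcomp (single p 1 - single p' 1) := by
  induction x using induction_linear with
  | zero => simp
  | add x y hx hy => rw [add_mul, map_add, map_add, hx, hy, add_smul]
  | single q b =>
    have hqpp : h (q * p) = h (q * p') := by rw [map_mul, map_mul, hpp]
    rw [mul_sub, single_mul_single, single_mul_single, ← smul_single',
      ← smul_single', ← smul_sub, map_smul, liftV_single_sub_single hcomp hqpp,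
      liftV_single_sub_single hcomp hpp, kerDiv_mul_div_kerDiv_mul hcomp q hpp]
    simp [smul_tmul']

theorem liftV_mul (x : ℤ[P]) {u : ℤ[P]} (hu : u ∈ RingHom.ker (mapDomainRingHom ℤ h)) :
    liftV hcomp (x * u) = mapDomainRingHom ℤ h x • liftV hcomp u := by
  replace hu : u ∈ LinearMap.ker (mapDomainLinearMap ℤ ℤ h) := hu
  rw [ker_mapDomainLinearMap] at hu
  induction hu using Submodule.span_induction with
  | mem _ hu =>
    obtain ⟨p, p', hpp, rfl⟩ := hu
    exact liftV_mul_single_sub_single hcomp x hpp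
  | zero => simp
  | add u v _ _ hu hv => rw [mul_add, map_add, map_add, hu, hv, smul_add]
  | smul n u _ hu => rw [mul_smul_comm, map_smul, map_smul, hu, smul_comm]

noncomputable def vh :
    (RingHom.ker (mapDomainRingHom ℤ h)).Cotangent →ₗ[ℤ] ℤ[N] ⊗[ℤ] Additive (MonoidHom.ker hgp) :=
  Ideal.Cotangent.lift
    (liftV hcomp ∘ₗ (RingHom.ker (mapDomainRingHom ℤ h)).subtype.restrictScalars ℤ)
    fun x y => by simp [liftV_mul hcomp x y.2, RingHom.mem_ker.1 x.2]

theorem vh_toCotangent (u : RingHom.ker (mapDomainRingHom ℤ h)) :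
    vh hcomp ((RingHom.ker (mapDomainRingHom ℤ h)).toCotangent u) = liftV hcomp u :=
  rfl

end KerCotangent

open KerCotangent in
theorem stmt19_general (P N : Type) [CommMonoid P] [CommMonoid N]
    (h : P →* N)
    (Pgp Ngp : Type) [CommGroup Pgp] [CommGroup Ngp]
    (ιP : P →* Pgp) (ιN : N →* Ngp) (hgp : Pgp →* Ngp)
    (hcomp : ∀ p : P, hgp (ιP p) = ιN (h p)) :
    -- `J` is generated as an abelian group by the elements `p - p'` with `h p = h p'`
    (RingHom.ker (MonoidAlgebra.mapDomainRingHom ℤ h)).restrictScalars ℤ =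
      Submodule.span ℤ {x : MonoidAlgebra ℤ P | ∃ p p' : P, h p = h p' ∧
        x = MonoidAlgebra.single p (1 : ℤ) - MonoidAlgebra.single p' (1 : ℤ)} ∧
    -- `v_h : J/J² → ℤ[N] ⊗ W₀` is well defined and `ℤ[N]`-linear
    ∃ v : (RingHom.ker (MonoidAlgebra.mapDomainRingHom ℤ h)).Cotangent →ₗ[ℤ]
        (MonoidAlgebra ℤ N ⊗[ℤ] Additive ↥(MonoidHom.ker hgp)),
      (∀ (u : ↥(RingHom.ker (MonoidAlgebra.mapDomainRingHom ℤ h))) (p p' : P)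
          (w : ↥(MonoidHom.ker hgp)),
        h p = h p' →
        (u : MonoidAlgebra ℤ P) =
          MonoidAlgebra.single p (1 : ℤ) - MonoidAlgebra.single p' (1 : ℤ) →
        (w : Pgp) = ιP p * (ιP p')⁻¹ →
        v ((RingHom.ker (MonoidAlgebra.mapDomainRingHom ℤ h)).toCotangent u) =
          MonoidAlgebra.single (h p') (1 : ℤ) ⊗ₜ[ℤ] Additive.ofMul w) ∧
      (∀ (q : P) (x : (RingHom.ker (MonoidAlgebra.mapDomainRingHom ℤ h)).Cotangent),
        v ((MonoidAlgebra.single q (1 : ℤ)) • x) =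
          (MonoidAlgebra.single (h q) (1 : ℤ)) • v x) := by
  refine ⟨MonoidAlgebra.ker_mapDomainLinearMap h, vh hcomp, ?_, ?_⟩
  · intro u p p' w hpp hu hw
    rw [vh_toCotangent, hu, liftV_single_sub_single hcomp hpp]
    congr
    ext
    rw [coe_kerDiv_div_kerDiv hcomp hpp, hw, div_eq_mul_inv]
  · intro q x
    obtain ⟨u, rfl⟩ := Ideal.toCotangent_surjective _ x
    rw [← map_smul, vh_toCotangent, vh_toCotangent, Submodule.coe_smul, smul_eq_mul,
      liftV_mul hcomp _ u.2, MonoidAlgebra.mapDomainRingHom_apply, MonoidAlgebra.mapDomain_single]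

/-- let `h : P → N` be a surjective homomorphism of commutative monoids,
`J = ker(ℤ[P] → ℤ[N])`, `P^gp`, `N^gp` the group completions (given here by groups `Pgp`,
`Ngp` with maps `ιP`, `ιN` and an induced map `hgp` compatible with `h`), and
`W₀ = ker(hgp : P^gp → N^gp)` (written additively).  Then `J` is generated, even as an
abelian group, by the elements `p − p'` with `h p = h p'`, and the map
`v_h : J/J² → ℤ[N] ⊗_ℤ W₀`, `λ(p − p') ↦ λ·h(p') ⊗ (p − p')`, is a well-defined
`ℤ[N]`-module homomorphism (equivalently, an additive map `v` satisfying
`v(q • x) = h(q) • v(x)`). -/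
theorem stmt19 (P N : Type) [CommMonoid P] [CommMonoid N]
    (h : P →* N) (hh : Function.Surjective h)
    (Pgp Ngp : Type) [CommGroup Pgp] [CommGroup Ngp]
    (ιP : P →* Pgp) (ιN : N →* Ngp) (hgp : Pgp →* Ngp)
    (hcomp : ∀ p : P, hgp (ιP p) = ιN (h p)) :
    -- `J` is generated as an abelian group by the elements `p - p'` with `h p = h p'`
    (RingHom.ker (MonoidAlgebra.mapDomainRingHom ℤ h)).restrictScalars ℤ =
      Submodule.span ℤ {x : MonoidAlgebra ℤ P | ∃ p p' : P, h p = h p' ∧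
        x = MonoidAlgebra.single p (1 : ℤ) - MonoidAlgebra.single p' (1 : ℤ)} ∧
    -- `v_h : J/J² → ℤ[N] ⊗ W₀` is well defined and `ℤ[N]`-linear
    ∃ v : (RingHom.ker (MonoidAlgebra.mapDomainRingHom ℤ h)).Cotangent →ₗ[ℤ]
        (MonoidAlgebra ℤ N ⊗[ℤ] Additive ↥(MonoidHom.ker hgp)),
      (∀ (u : ↥(RingHom.ker (MonoidAlgebra.mapDomainRingHom ℤ h))) (p p' : P)
          (w : ↥(MonoidHom.ker hgp)),
        h p = h p' →
        (u : MonoidAlgebra ℤ P) =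
          MonoidAlgebra.single p (1 : ℤ) - MonoidAlgebra.single p' (1 : ℤ) →
        (w : Pgp) = ιP p * (ιP p')⁻¹ →
        v ((RingHom.ker (MonoidAlgebra.mapDomainRingHom ℤ h)).toCotangent u) =
          MonoidAlgebra.single (h p') (1 : ℤ) ⊗ₜ[ℤ] Additive.ofMul w) ∧
      (∀ (q : P) (x : (RingHom.ker (MonoidAlgebra.mapDomainRingHom ℤ h)).Cotangent),
        v ((MonoidAlgebra.single q (1 : ℤ)) • x) =
          (MonoidAlgebra.single (h q) (1 : ℤ)) • v x) :=
  stmt19_general P N h Pgp Ngp ιP ιN hgp hcomp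
end
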